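/- Let Γ' = Γ ∪ {∀x φ[∃y◇ψ]} be a clean finite set of formulas, each a subformula of the ABBABE fragment, where ∃y◇ψ is a component of φ. If ⋀Γ ∧ ∀x φ[∃y◇ψ] is satisfiable in an increasing domain model, then for l = 2^{|Γ'|} exactly, the formula ⋀Γ ∧ ∃y1∃y1'∃y2∃y2'…∃yl∃yl' ∀x φ[ȳ◇ψ] is satisfiable in an increasing domain model, with y1,y1',…,yl,yl' fresh variables and φ[ȳ◇ψ] obtained from φ by replacing the component ∃y◇ψ with ⋁_{i≤l}( ◇ψ[yi/y] ∨ ◇ψ[yi'/y] ). -/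

import Mathlib

set_option maxHeartbeats 1000000

/-! ## Syntax of first-order modal logic (FOML)

Predicate symbols and variables are represented by natural numbers; an atom
`atom p args` applies the predicate symbol `p` to the list of variables `args`
(the arity of `p` in this occurrence is the length of `args`). -/
inductive Formula : Type where
  | atom (p : ℕ) (args : List ℕ)
  | neg  (φ : Formula)
  | and  (φ ψ : Formula)
  | or   (φ ψ : Formula)
  | box  (φ : Formula)
  | dia  (φ : Formula)
  | ex   (x : ℕ) (φ : Formula)
  | all  (x : ℕ) (φ : Formula)
deriving DecidableEq

namespace Formula

def imp (φ ψ : Formula) : Formula := .or φ.neg ψ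
def biimp (φ ψ : Formula) : Formula := .and (imp φ ψ) (imp ψ φ)
/-- a fixed tautology `⊤` -/
def top : Formula := .or (.atom 0 []) (.neg (.atom 0 []))
/-- a fixed contradiction `⊥` -/
def bot : Formula := .and (.atom 0 []) (.neg (.atom 0 []))

end Formula

def bigAnd (l : List Formula) : Formula := l.foldr Formula.and Formula.top
def bigOr  (l : List Formula) : Formula := l.foldr Formula.or Formula.bot

/-! ## Semantics: Kripke structures with world-relative domains -/

structure Model where
  W : Type
  D : Type
  R : W → W → Prop
  dom : W → Set D
  ρ : W → ℕ → Set (List D)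

/-- `M` is an increasing domain model: nonempty countable set of worlds, nonempty
countable domain, nonempty local domains that increase along the accessibility
relation, and interpretations of predicates at a world take values in the local
domain of that world. -/
def Model.Increasing (M : Model) : Prop :=
  Nonempty M.W ∧ Nonempty M.D ∧ Countable M.W ∧ Countable M.D ∧
    (∀ w, (M.dom w).Nonempty) ∧
    (∀ w v, M.R w v → M.dom w ⊆ M.dom v) ∧
    (∀ w p l, l ∈ M.ρ w p → ∀ d ∈ l, d ∈ M.dom w)

def Model.sat (M : Model) : M.W → (ℕ → M.D) → Formula → Prop
  | w, σ, .atom p args => args.map σ ∈ M.ρ w p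
  | w, σ, .neg φ => ¬ M.sat w σ φ
  | w, σ, .and φ ψ => M.sat w σ φ ∧ M.sat w σ ψ
  | w, σ, .or φ ψ => M.sat w σ φ ∨ M.sat w σ ψ
  | w, σ, .box φ => ∀ v, M.R w v → M.sat v σ φ
  | w, σ, .dia φ => ∃ v, M.R w v ∧ M.sat v σ φ
  | w, σ, .ex x φ => ∃ d ∈ M.dom w, M.sat w (Function.update σ x d) φ
  | w, σ, .all x φ => ∀ d ∈ M.dom w, M.sat w (Function.update σ x d) φ

/-- the assignment `σ` is relevant at the world `w` -/
def Model.relevant (M : Model) (w : M.W) (σ : ℕ → M.D) : Prop := ∀ x, σ x ∈ M.dom w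

/-- satisfiability over increasing domain models -/
def Satisfiable (φ : Formula) : Prop :=
  ∃ (M : Model), M.Increasing ∧ ∃ (w : M.W) (σ : ℕ → M.D), M.relevant w σ ∧ M.sat w σ φ
/-! ## Free and bound variables, cleanliness, substitution, α-equivalence -/

namespace Formula

def fv : Formula → Finset ℕ
  | .atom _ args => args.toFinset
  | .neg φ => φ.fv
  | .and φ ψ => φ.fv ∪ ψ.fv
  | .or φ ψ => φ.fv ∪ ψ.fv
  | .box φ => φ.fv
  | .dia φ => φ.fv
  | .ex x φ => φ.fv.erase x
  | .all x φ => φ.fv.erase x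

def bv : Formula → Finset ℕ
  | .atom _ _ => ∅
  | .neg φ => φ.bv
  | .and φ ψ => φ.bv ∪ ψ.bv
  | .or φ ψ => φ.bv ∪ ψ.bv
  | .box φ => φ.bv
  | .dia φ => φ.bv
  | .ex x φ => insert x φ.bv
  | .all x φ => insert x φ.bv

/-- every use of a quantifier in the formula quantifies a distinct variable -/
def uniqueBinders : Formula → Prop
  | .atom _ _ => True
  | .neg φ => φ.uniqueBinders
  | .and φ ψ => φ.uniqueBinders ∧ ψ.uniqueBinders ∧ Disjoint φ.bv ψ.bv
  | .or φ ψ => φ.uniqueBinders ∧ ψ.uniqueBinders ∧ Disjoint φ.bv ψ.bv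
  | .box φ => φ.uniqueBinders
  | .dia φ => φ.uniqueBinders
  | .ex x φ => φ.uniqueBinders ∧ x ∉ φ.bv
  | .all x φ => φ.uniqueBinders ∧ x ∉ φ.bv

/-- a formula is clean if no variable occurs both bound and free in it and
every use of a quantifier quantifies a distinct variable -/
def Clean (φ : Formula) : Prop := φ.uniqueBinders ∧ Disjoint φ.fv φ.bv

/-- `φ.subst y z` is `φ[z/y]`: replace every free occurrence of `y` by `z` -/
def subst (y z : ℕ) : Formula → Formula
  | .atom p args => .atom p (args.map fun v => if v = y then z else v)
  | .neg φ => .neg (φ.subst y z)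
  | .and φ ψ => .and (φ.subst y z) (ψ.subst y z)
  | .or φ ψ => .or (φ.subst y z) (ψ.subst y z)
  | .box φ => .box (φ.subst y z)
  | .dia φ => .dia (φ.subst y z)
  | .ex x φ => if x = y then .ex x φ else .ex x (φ.subst y z)
  | .all x φ => if x = y then .all x φ else .all x (φ.subst y z)

def isLiteralB : Formula → Bool
  | .atom _ _ => true
  | .neg (.atom _ _) => true
  | _ => false

/-- a module is a literal, a `□`-formula, or a `◇`-formula -/
def isModuleB : Formula → Bool
  | .box _ => true
  | .dia _ => true
  | φ => φ.isLiteralB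

/-- the component set `C(φ)` of a formula -/
def comps : Formula → Finset Formula
  | .and φ ψ => φ.comps ∪ ψ.comps
  | .or φ ψ => φ.comps ∪ ψ.comps
  | .ex x φ => insert (.ex x φ) φ.comps
  | .all x φ => insert (.all x φ) φ.comps
  | φ => {φ}

end Formula

/-- α-equivalence (renaming of bound variables) -/
inductive AlphaEq : Formula → Formula → Prop where
  | atom (p : ℕ) (args : List ℕ) : AlphaEq (.atom p args) (.atom p args)
  | neg {φ φ'} : AlphaEq φ φ' → AlphaEq (.neg φ) (.neg φ')
  | and {φ φ' ψ ψ'} : AlphaEq φ φ' → AlphaEq ψ ψ' → AlphaEq (.and φ ψ) (.and φ' ψ')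
  | or {φ φ' ψ ψ'} : AlphaEq φ φ' → AlphaEq ψ ψ' → AlphaEq (.or φ ψ) (.or φ' ψ')
  | box {φ φ'} : AlphaEq φ φ' → AlphaEq (.box φ) (.box φ')
  | dia {φ φ'} : AlphaEq φ φ' → AlphaEq (.dia φ) (.dia φ')
  | ex {x x' : ℕ} {φ φ'}
      (h : ∀ z, z ∉ φ.bv ∪ φ'.bv → AlphaEq (φ.subst x z) (φ'.subst x' z)) :
      AlphaEq (.ex x φ) (.ex x' φ')
  | all {x x' : ℕ} {φ φ'}
      (h : ∀ z, z ∉ φ.bv ∪ φ'.bv → AlphaEq (φ.subst x z) (φ'.subst x' z)) :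
      AlphaEq (.all x φ) (.all x' φ')

/-- a finite set of formulas is clean if the conjunction of its members is clean -/
def CleanSet (Γ : Finset Formula) : Prop :=
  (∀ φ ∈ Γ, φ.uniqueBinders) ∧
    Disjoint (Γ.sup Formula.fv) (Γ.sup Formula.bv) ∧
    (∀ φ ∈ Γ, ∀ ψ ∈ Γ, φ ≠ ψ → Disjoint φ.bv ψ.bv)

/-- `Γ` is Existential-safe: every component of every formula of `Γ` is a module
or universally quantified -/
def ExSafe (Γ : Finset Formula) : Prop :=
  ∀ φ ∈ Γ, ∀ β ∈ φ.comps, β.isModuleB = true ∨ ∃ (x : ℕ) (γ : Formula), β = .all x γ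
/-- The `ABBABE` fragment (in negation normal form): literals, `∧`, `∨`, `□α`,
`◇α`, and the bundles `∀x□α`, `□∀xα`, `□∃xα` together with their duals
`∃x◇α`, `◇∃xα`, `◇∀xα`. -/
inductive ABBABE : Formula → Prop where
  | atom (p : ℕ) (args : List ℕ) : ABBABE (.atom p args)
  | natom (p : ℕ) (args : List ℕ) : ABBABE (.neg (.atom p args))
  | and {φ ψ : Formula} : ABBABE φ → ABBABE ψ → ABBABE (.and φ ψ)
  | or {φ ψ : Formula} : ABBABE φ → ABBABE ψ → ABBABE (.or φ ψ)
  | box {φ : Formula} : ABBABE φ → ABBABE (.box φ)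
  | dia {φ : Formula} : ABBABE φ → ABBABE (.dia φ)
  | allBox {x : ℕ} {φ : Formula} : ABBABE φ → ABBABE (.all x (.box φ))
  | exDia {x : ℕ} {φ : Formula} : ABBABE φ → ABBABE (.ex x (.dia φ))
  | boxAll {x : ℕ} {φ : Formula} : ABBABE φ → ABBABE (.box (.all x φ))
  | diaEx {x : ℕ} {φ : Formula} : ABBABE φ → ABBABE (.dia (.ex x φ))
  | boxEx {x : ℕ} {φ : Formula} : ABBABE φ → ABBABE (.box (.ex x φ))
  | diaAll {x : ℕ} {φ : Formula} : ABBABE φ → ABBABE (.dia (.all x φ))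

/-- `Subf φ ψ` : `φ` is a subformula of `ψ` -/
inductive Subf : Formula → Formula → Prop where
  | refl (φ : Formula) : Subf φ φ
  | neg {φ ψ} : Subf φ ψ → Subf φ (.neg ψ)
  | andL {φ ψ χ} : Subf φ ψ → Subf φ (.and ψ χ)
  | andR {φ ψ χ} : Subf φ χ → Subf φ (.and ψ χ)
  | orL {φ ψ χ} : Subf φ ψ → Subf φ (.or ψ χ)
  | orR {φ ψ χ} : Subf φ χ → Subf φ (.or ψ χ)
  | box {φ ψ} : Subf φ ψ → Subf φ (.box ψ)
  | dia {φ ψ} : Subf φ ψ → Subf φ (.dia ψ)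
  | ex {x : ℕ} {φ ψ} : Subf φ ψ → Subf φ (.ex x ψ)
  | all {x : ℕ} {φ ψ} : Subf φ ψ → Subf φ (.all x ψ)

/-- `φ` is a subformula of the `ABBABE` fragment: it is a subformula of some
formula of the fragment -/
def IsSubABBABE (φ : Formula) : Prop := ∃ ψ, ABBABE ψ ∧ Subf φ ψ
/-- a finite set of formulas is (simultaneously) satisfiable in an increasing
domain model with a relevant assignment -/
def SatSet (Γ : Finset Formula) : Prop :=
  ∃ (M : Model), M.Increasing ∧ ∃ (w : M.W) (σ : ℕ → M.D),
    M.relevant w σ ∧ ∀ φ ∈ Γ, M.sat w σ φ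

/-- the size (number of symbols) of a formula -/
def Formula.size : Formula → ℕ
  | .atom _ args => 1 + args.length
  | .neg φ => φ.size + 1
  | .and φ ψ => φ.size + ψ.size + 1
  | .or φ ψ => φ.size + ψ.size + 1
  | .box φ => φ.size + 1
  | .dia φ => φ.size + 1
  | .ex _ φ => φ.size + 2
  | .all _ φ => φ.size + 2

/-- `replComp t r φ` is `φ[r/t]`: the result of replacing the component `t` of
`φ` by `r` (descending only through boolean connectives and quantifiers) -/
def replComp (t r : Formula) (φ : Formula) : Formula :=
  if φ = t then r
  else
    match φ with
    | .and φ₁ φ₂ => .and (replComp t r φ₁) (replComp t r φ₂)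
    | .or φ₁ φ₂ => .or (replComp t r φ₁) (replComp t r φ₂)
    | .ex x φ₁ => .ex x (replComp t r φ₁)
    | .all x φ₁ => .all x (replComp t r φ₁)
    | φ' => φ'

/-- the existential prefix `∃y1∃y1'∃y2∃y2'…∃yl∃yl'` given by a list of pairs -/
def exChain (ys : List (ℕ × ℕ)) (φ : Formula) : Formula :=
  ys.foldr (fun p acc => .ex p.1 (.ex p.2 acc)) φ

/-- the disjunction `⋁_{i≤l} ( ◇ψ[yi/y] ∨ ◇ψ[yi'/y] )` -/
def mkWitDisj (y : ℕ) (ψ : Formula) (ys : List (ℕ × ℕ)) : Formula :=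
  bigOr (ys.map fun p => .or (.dia (ψ.subst y p.1)) (.dia (ψ.subst y p.2)))


/-! Unravel the model `M` at the satisfying world `w`: a new root sees, besides a main copy of
`M`, one copy of `M` for every element `e` of the domain of `w` and bit `b`, and each copy reads
the elements of the new domain in its own way. The type of an element `a` of the domain of `w`
records which subformulas `δ` of the bodies of the `∀z χ ∈ Γ'` hold at `w` when `z` denotes `a`;
there are at most `2^{|Γ'|}` types. The fresh variables `yᵢ, yᵢ'` denote placeholders
`(i, false), (i, true)`, read as a fixed element of the `i`-th type, except that in the copy
`(e, b)` the placeholder `(i, b)` of the type `i` of `e` denotes `e` itself. Readings preserve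
types, so the `ABBABE` formulas of `Γ'` still hold at the root; for disjunctions this is where
types are needed. If `e` witnesses `∃y◇ψ` for `x := d`, then `d` is read unchanged in one of the
copies `(e, false)`, `(e, true)`, where `e` then witnesses `◇ψ[yᵢ/y]` or `◇ψ[yᵢ'/y]`. -/

namespace Formula

def subfs : Formula → Finset Formula
  | .atom p args => {.atom p args}
  | .neg χ => insert (.neg χ) χ.subfs
  | .and χ₁ χ₂ => insert (.and χ₁ χ₂) (χ₁.subfs ∪ χ₂.subfs)
  | .or χ₁ χ₂ => insert (.or χ₁ χ₂) (χ₁.subfs ∪ χ₂.subfs)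
  | .box χ => insert (.box χ) χ.subfs
  | .dia χ => insert (.dia χ) χ.subfs
  | .ex v χ => insert (.ex v χ) χ.subfs
  | .all v χ => insert (.all v χ) χ.subfs

theorem mem_subfs_self (χ : Formula) : χ ∈ χ.subfs := by
  cases χ <;> simp [subfs]

theorem card_subfs_le_size (χ : Formula) : χ.subfs.card ≤ χ.size := by
  induction χ with
  | atom => simp [subfs, size]
  | and χ₁ χ₂ ih₁ ih₂ | or χ₁ χ₂ ih₁ ih₂ =>
    have := Finset.card_union_le χ₁.subfs χ₂.subfs
    exact (Finset.card_insert_le _ _).trans (by simp only [size]; omega)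
  | neg χ ih | box χ ih | dia χ ih | ex _ χ ih | all _ χ ih =>
    exact (Finset.card_insert_le _ _).trans (by simp only [size]; omega)

def vars (χ : Formula) : Finset ℕ := χ.fv ∪ χ.bv

theorem vars_subset_of_mem_subfs {δ χ : Formula} (h : δ ∈ χ.subfs) : δ.vars ⊆ χ.vars := by
  induction χ with
  | atom => simp_all [subfs]
  | and χ₁ χ₂ ih₁ ih₂ | or χ₁ χ₂ ih₁ ih₂ =>
    simp only [subfs, Finset.mem_insert, Finset.mem_union] at h
    rcases h with rfl | h | h
    · exact le_rfl
    · exact (ih₁ h).trans (by intro v; simp only [vars, fv, bv, Finset.mem_union]; tauto)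
    · exact (ih₂ h).trans (by intro v; simp only [vars, fv, bv, Finset.mem_union]; tauto)
  | neg χ ih | box χ ih | dia χ ih =>
    simp only [subfs, Finset.mem_insert] at h
    rcases h with rfl | h
    · exact le_rfl
    · exact ih h
  | ex u χ ih | all u χ ih =>
    simp only [subfs, Finset.mem_insert] at h
    rcases h with rfl | h
    · exact le_rfl
    · refine (ih h).trans ?_
      intro v
      simp only [vars, fv, bv, Finset.mem_union, Finset.mem_erase, Finset.mem_insert]
      tauto

theorem comps_subset_subfs (χ : Formula) : χ.comps ⊆ χ.subfs := by
  induction χ with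
  | and χ₁ χ₂ ih₁ ih₂ | or χ₁ χ₂ ih₁ ih₂ =>
    simp only [comps, subfs]
    exact Finset.union_subset_union ih₁ ih₂ |>.trans (Finset.subset_insert _ _)
  | ex u χ ih | all u χ ih =>
    simp only [comps, subfs]
    exact Finset.insert_subset_insert _ ih
  | _ => simp [comps, subfs]

def typePairs : Formula → Finset (ℕ × Formula)
  | .all z χ => χ.subfs.image (Prod.mk z)
  | _ => ∅

theorem card_typePairs_le_size (γ : Formula) : γ.typePairs.card ≤ γ.size := by
  cases γ with
  | all z χ =>
    calc (χ.subfs.image (Prod.mk z)).card ≤ χ.subfs.card := Finset.card_image_le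
      _ ≤ χ.size := χ.card_subfs_le_size
      _ ≤ (Formula.all z χ).size := by simp only [size]; omega
  | _ => simp [typePairs]

end Formula

namespace Model

variable (M : Model)

theorem sat_congr {χ : Formula} {w : M.W} {σ σ' : ℕ → M.D} (h : ∀ v ∈ χ.fv, σ v = σ' v) :
    M.sat w σ χ ↔ M.sat w σ' χ := by
  induction χ generalizing w σ σ' with
  | atom p args =>
    simp only [sat, List.map_congr_left (fun v hv => h v (List.mem_toFinset.mpr hv))]
  | neg χ ih => exact not_congr (ih h)
  | and χ₁ χ₂ ih₁ ih₂ =>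
    simp only [Formula.fv, Finset.mem_union] at h
    exact and_congr (ih₁ fun v hv => h v (.inl hv)) (ih₂ fun v hv => h v (.inr hv))
  | or χ₁ χ₂ ih₁ ih₂ =>
    simp only [Formula.fv, Finset.mem_union] at h
    exact or_congr (ih₁ fun v hv => h v (.inl hv)) (ih₂ fun v hv => h v (.inr hv))
  | box χ ih => exact forall₂_congr fun v _ => ih h
  | dia χ ih => exact exists_congr fun v => and_congr_right fun _ => ih h
  | ex u χ ih | all u χ ih =>
    have hu : ∀ d, ∀ v ∈ χ.fv, Function.update σ u d v = Function.update σ' u d v := by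
      intro d v hv
      rcases eq_or_ne v u with rfl | hvu
      · simp
      · simpa [hvu] using h v (Finset.mem_erase.mpr ⟨hvu, hv⟩)
    first
    | exact exists_congr fun d => and_congr_right fun _ => ih (hu d)
    | exact forall₂_congr fun d _ => ih (hu d)

theorem sat_subst {y z : ℕ} {χ : Formula} (hz : z ∉ χ.bv) {w : M.W} {σ : ℕ → M.D} :
    M.sat w σ (χ.subst y z) ↔ M.sat w (Function.update σ y (σ z)) χ := by
  induction χ generalizing w σ with
  | atom p args =>
    simp only [sat, Formula.subst, List.map_map]
    congr! 2
    funext v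
    by_cases hv : v = y <;> simp [hv]
  | neg χ ih => exact not_congr (ih hz)
  | and χ₁ χ₂ ih₁ ih₂ =>
    simp only [Formula.bv, Finset.mem_union, not_or] at hz
    exact and_congr (ih₁ hz.1) (ih₂ hz.2)
  | or χ₁ χ₂ ih₁ ih₂ =>
    simp only [Formula.bv, Finset.mem_union, not_or] at hz
    exact or_congr (ih₁ hz.1) (ih₂ hz.2)
  | box χ ih => exact forall₂_congr fun v _ => ih hz
  | dia χ ih => exact exists_congr fun v => and_congr_right fun _ => ih hz
  | ex u χ ih | all u χ ih =>
    simp only [Formula.bv, Finset.mem_insert, not_or] at hz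
    by_cases huy : u = y
    · subst huy
      simp only [Formula.subst, if_true, sat, Function.update_idem]
    · have hupd : ∀ d, Function.update (Function.update σ u d) y (Function.update σ u d z) =
          Function.update (Function.update σ y (σ z)) u d := fun d => by
        rw [Function.update_of_ne hz.1, Function.update_comm (Ne.symm huy)]
      simp only [Formula.subst, if_neg huy, sat, ih hz.2, hupd]

theorem sat_bigOr_of_mem {w : M.W} {σ : ℕ → M.D} {α : Formula} {L : List Formula}
    (hα : α ∈ L) (h : M.sat w σ α) : M.sat w σ (bigOr L) := by
  induction L with
  | nil => cases hα
  | cons β L ih =>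
    rcases List.mem_cons.mp hα with rfl | hα
    · exact Or.inl h
    · exact Or.inr (ih hα)

theorem sat_exChain_of_relevant {w : M.W} {σ : ℕ → M.D} (hσ : M.relevant w σ) {χ : Formula}
    (h : M.sat w σ χ) (ys : List (ℕ × ℕ)) : M.sat w σ (exChain ys χ) := by
  induction ys with
  | nil => exact h
  | cons p ys ih =>
    refine ⟨σ p.1, hσ _, σ p.2, hσ _, ?_⟩
    simpa only [exChain, List.foldr_cons, Function.update_eq_self] using ih

/-- In an `ABBABE` formula the component `∃y◇ψ` is reached through `∧` and `∨` only. -/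
theorem sat_replComp {w : M.W} {σ : ℕ → M.D} {y : ℕ} {ψ r χ : Formula} (hχ : ABBABE χ)
    (hr : M.sat w σ (.ex y (.dia ψ)) → M.sat w σ r) (h : M.sat w σ χ) :
    M.sat w σ (replComp (.ex y (.dia ψ)) r χ) := by
  induction hχ with
  | and _ _ ih₁ ih₂ =>
    simpa [replComp] using ⟨ih₁ h.1, ih₂ h.2⟩
  | or _ _ ih₁ ih₂ =>
    simpa [replComp, sat] using h.imp ih₁ ih₂
  | @exDia v α _ _ =>
    by_cases ht : Formula.ex v (.dia α) = .ex y (.dia ψ)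
    · rw [replComp, if_pos ht]
      exact hr (ht ▸ h)
    · simpa [replComp, ht] using h
  | _ => simpa [replComp] using h

end Model

def QuantABBABE (γ : Formula) : Prop :=
  ABBABE γ ∨ (∃ z χ, γ = .all z χ ∧ ABBABE χ) ∨ (∃ z χ, γ = .ex z χ ∧ ABBABE χ)

theorem QuantABBABE.of_subf {θ γ : Formula} (hγ : Subf γ θ) (hθ : QuantABBABE θ) :
    QuantABBABE γ := by
  induction hγ with
  | refl => exact hθ
  | _ _ ih =>
    apply ih
    rcases hθ with h | ⟨z, χ, h, hχ⟩ | ⟨z, χ, h, hχ⟩ <;> cases h <;>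
      first
      | exact .inl (by assumption)
      | exact .inl (.atom _ _)
      | exact .inl (.box (by assumption))
      | exact .inl (.dia (by assumption))
      | exact .inr (.inl ⟨_, _, rfl, by assumption⟩)
      | exact .inr (.inr ⟨_, _, rfl, by assumption⟩)

theorem IsSubABBABE.quantABBABE {γ : Formula} (hγ : IsSubABBABE γ) : QuantABBABE γ :=
  let ⟨_, hθ, hs⟩ := hγ
  .of_subf hs (.inl hθ)

theorem IsSubABBABE.abbabe_of_all {x : ℕ} {φ : Formula} (h : IsSubABBABE (.all x φ)) :
    ABBABE φ := by
  rcases h.quantABBABE with hA | ⟨z, χ, he, hχ⟩ | ⟨z, χ, he, _⟩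
  · cases hA with | allBox hα => exact .box hα
  · cases he; exact hχ
  · cases he

namespace Model

variable (M : Model) (w : M.W) {D' O : Type} (k : O → D' → M.D) (o₀ : O)

/-- `M` unravelled at `w` into copies indexed by `O`: the copy `o` reads the elements of `D'`
through `k o`, and the root `none` reads them through `k o₀`. -/
abbrev glue : Model where
  W := Option (O × M.W)
  D := D'
  R
    | none, some (_, v) => M.R w v
    | some (o, u), some (o', v) => o = o' ∧ M.R u v
    | _, none => False
  dom u := k (u.getD (o₀, w)).1 ⁻¹' M.dom (u.getD (o₀, w)).2
  ρ u p := {l | l.map (k (u.getD (o₀, w)).1) ∈ M.ρ (u.getD (o₀, w)).2 p}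

variable {M w k o₀}

theorem glue_sat_some (hk : ∀ o, (k o).Surjective) (χ : Formula) (o : O) (u : M.W)
    (τ : ℕ → D') : (M.glue w k o₀).sat (some (o, u)) τ χ ↔ M.sat u (k o ∘ τ) χ := by
  induction χ generalizing u τ with
  | atom p args =>
    show (args.map τ).map (k o) ∈ M.ρ u p ↔ _
    rw [List.map_map]; rfl
  | neg χ ih => exact not_congr (ih u τ)
  | and χ₁ χ₂ ih₁ ih₂ => exact and_congr (ih₁ u τ) (ih₂ u τ)
  | or χ₁ χ₂ ih₁ ih₂ => exact or_congr (ih₁ u τ) (ih₂ u τ)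
  | box χ ih =>
    refine ⟨fun h v hv => (ih v τ).mp (h (some (o, v)) ⟨rfl, hv⟩), ?_⟩
    rintro h (_ | ⟨o', v⟩) hv
    · exact hv.elim
    · obtain ⟨rfl, hv⟩ := hv
      exact (ih v τ).mpr (h v hv)
  | dia χ ih =>
    refine ⟨?_, fun ⟨v, hv, h⟩ => ⟨some (o, v), ⟨rfl, hv⟩, (ih v τ).mpr h⟩⟩
    rintro ⟨_ | ⟨o', v⟩, hv, h⟩
    · exact hv.elim
    · obtain ⟨rfl, hv⟩ := hv
      exact ⟨v, hv, (ih v τ).mp h⟩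
  | ex x χ ih =>
    constructor
    · rintro ⟨d, hd, h⟩
      exact ⟨k o d, hd, Function.comp_update (k o) τ x d ▸ (ih u _).mp h⟩
    · rintro ⟨a, ha, h⟩
      obtain ⟨d, rfl⟩ := hk o a
      exact ⟨d, ha, (ih u _).mpr (Function.comp_update (k o) τ x d ▸ h)⟩
  | all x χ ih =>
    constructor
    · intro h a ha
      obtain ⟨d, rfl⟩ := hk o a
      exact Function.comp_update (k o) τ x d ▸ (ih u _).mp (h d ha)
    · intro h d hd
      exact (ih u _).mpr (Function.comp_update (k o) τ x d ▸ h (k o d) hd)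

theorem glue_sat_none_box (hk : ∀ o, (k o).Surjective) {χ : Formula} {τ : ℕ → D'} :
    (M.glue w k o₀).sat none τ (.box χ) ↔ ∀ o, M.sat w (k o ∘ τ) (.box χ) := by
  refine ⟨fun h o v hv => (glue_sat_some hk χ o v τ).mp (h (some (o, v)) hv), ?_⟩
  rintro h (_ | ⟨o, v⟩) hv
  · exact hv.elim
  · exact (glue_sat_some hk χ o v τ).mpr (h o v hv)

theorem glue_sat_none_dia (hk : ∀ o, (k o).Surjective) {χ : Formula} {τ : ℕ → D'} :
    (M.glue w k o₀).sat none τ (.dia χ) ↔ ∃ o, M.sat w (k o ∘ τ) (.dia χ) := by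
  refine ⟨?_, fun ⟨o, v, hv, h⟩ => ⟨some (o, v), hv, (glue_sat_some hk χ o v τ).mpr h⟩⟩
  rintro ⟨_ | ⟨o, v⟩, hv, h⟩
  · exact hv.elim
  · exact ⟨o, v, hv, (glue_sat_some hk χ o v τ).mp h⟩

theorem glue_sat_none_atom {p : ℕ} {args : List ℕ} {τ : ℕ → D'} :
    (M.glue w k o₀).sat none τ (.atom p args) ↔ M.sat w (k o₀ ∘ τ) (.atom p args) := by
  show (args.map τ).map (k o₀) ∈ M.ρ w p ↔ _
  rw [List.map_map]; rfl

theorem glue_increasing (hM : M.Increasing) [Countable O] [Countable D']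
    (hk : ∀ o, (k o).Surjective) (hdom : ∀ o d, k o₀ d ∈ M.dom w → k o d ∈ M.dom w) :
    (M.glue w k o₀).Increasing := by
  obtain ⟨_, ⟨a⟩, _, _, hne, hmono, hρ⟩ := hM
  refine ⟨⟨none⟩, ⟨(hk o₀ a).choose⟩, inferInstanceAs (Countable (Option (O × M.W))),
    ‹_›, ?_, ?_, ?_⟩
  · intro u
    obtain ⟨a, ha⟩ := hne (u.getD (o₀, w)).2
    obtain ⟨d, rfl⟩ := hk (u.getD (o₀, w)).1 a
    exact ⟨d, ha⟩
  · rintro (_ | ⟨o, u⟩) (_ | ⟨o', v⟩) huv d hd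
    · exact huv.elim
    · exact hmono w v huv (hdom o' d hd)
    · exact huv.elim
    · obtain ⟨rfl, huv⟩ := huv
      exact hmono u v huv hd
  · intro u p l hl d hd
    exact hρ _ p _ hl _ (List.mem_map_of_mem hd)

/-- Only disjunctions need the truth of subformulas to be independent of the reading. -/
theorem glue_sat_none_of_ABBABE (hk : ∀ o, (k o).Surjective)
    (hdom : ∀ o d, k o₀ d ∈ M.dom w → k o d ∈ M.dom w) {τ : ℕ → D'} {χ : Formula}
    (hχ : ABBABE χ) (hsat : ∀ o, M.sat w (k o ∘ τ) χ)
    (hinv : ∀ δ ∈ χ.subfs, ∀ o, M.sat w (k o ∘ τ) δ ↔ M.sat w (k o₀ ∘ τ) δ) :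
    (M.glue w k o₀).sat none τ χ := by
  induction hχ with
  | atom => exact glue_sat_none_atom.mpr (hsat o₀)
  | natom => exact fun h => hsat o₀ (glue_sat_none_atom.mp h)
  | @and χ₁ χ₂ _ _ ih₁ ih₂ =>
    simp only [Formula.subfs, Finset.mem_insert, Finset.mem_union] at hinv
    exact ⟨ih₁ (fun o => (hsat o).1) fun δ hδ => hinv δ (.inr (.inl hδ)),
      ih₂ (fun o => (hsat o).2) fun δ hδ => hinv δ (.inr (.inr hδ))⟩
  | @or χ₁ χ₂ _ _ ih₁ ih₂ =>
    simp only [Formula.subfs, Finset.mem_insert, Finset.mem_union] at hinv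
    rcases hsat o₀ with h | h
    · exact .inl (ih₁ (fun o => (hinv χ₁ (.inr (.inl χ₁.mem_subfs_self)) o).mpr h)
        fun δ hδ => hinv δ (.inr (.inl hδ)))
    · exact .inr (ih₂ (fun o => (hinv χ₂ (.inr (.inr χ₂.mem_subfs_self)) o).mpr h)
        fun δ hδ => hinv δ (.inr (.inr hδ)))
  | box | boxAll | boxEx => exact (glue_sat_none_box hk).mpr hsat
  | dia | diaEx | diaAll => exact (glue_sat_none_dia hk).mpr ⟨o₀, hsat o₀⟩
  | allBox =>
    intro d hd
    refine (glue_sat_none_box hk).mpr fun o => ?_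
    rw [Function.comp_update]
    exact hsat o (k o d) (hdom o d hd)
  | exDia =>
    obtain ⟨a, ha, h⟩ := hsat o₀
    obtain ⟨d, rfl⟩ := hk o₀ a
    refine ⟨d, ha, (glue_sat_none_dia hk).mpr ⟨o₀, ?_⟩⟩
    rwa [Function.comp_update]

theorem exists_sat_of_glue_sat_none_exDia (hk : ∀ o, (k o).Surjective)
    (hdom : ∀ o d, k o₀ d ∈ M.dom w → k o d ∈ M.dom w) {τ : ℕ → D'} {y : ℕ} {ψ : Formula}
    (h : (M.glue w k o₀).sat none τ (.ex y (.dia ψ))) :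
    ∃ o, M.sat w (k o ∘ τ) (.ex y (.dia ψ)) := by
  obtain ⟨d, hd, hdia⟩ := h
  obtain ⟨o, hdia⟩ := (glue_sat_none_dia hk).mp hdia
  rw [Function.comp_update] at hdia
  exact ⟨o, k o d, hdom o d hd, hdia⟩

end Model

namespace BoundedWitness

structure Setup where
  M : Model
  w : M.W
  σ : ℕ → M.D
  relevant : M.relevant w σ
  Γ' : Finset Formula
  ys : List (ℕ × ℕ)
  nodup : (ys.map Prod.fst ++ ys.map Prod.snd).Nodup
  fresh : ∀ v ∈ ys.map Prod.fst ++ ys.map Prod.snd, ∀ γ ∈ Γ', v ∉ γ.vars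
  length_ge : 2 ^ Γ'.sum Formula.size ≤ ys.length

namespace Setup

open Classical

variable (S : Setup)

def freshVars : List ℕ := S.ys.map Prod.fst ++ S.ys.map Prod.snd

def pairs : Finset (ℕ × Formula) := S.Γ'.biUnion Formula.typePairs

noncomputable def type (a : S.M.D) : Finset (ℕ × Formula) :=
  S.pairs.filter fun p => S.M.sat S.w (Function.update S.σ p.1 a) p.2

noncomputable def types : List (Finset (ℕ × Formula)) := S.pairs.powerset.toList

noncomputable def code (T : Finset (ℕ × Formula)) : ℕ := S.types.idxOf T

noncomputable def decode (n : ℕ) : Finset (ℕ × Formula) := S.types.getD n ∅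

noncomputable def rep (T : Finset (ℕ × Formula)) : S.M.D :=
  if h : ∃ a ∈ S.M.dom S.w, S.type a = T then h.choose else S.σ 0

abbrev Elem : Type := S.M.D ⊕ (ℕ × Bool)

noncomputable def base : S.Elem → S.M.D := Sum.elim id fun s => S.rep (S.decode s.1)

noncomputable def interp : Option (S.M.dom S.w × Bool) → S.Elem → S.M.D
  | none => S.base
  | some (e, b) => Function.update S.base (.inr (S.code (S.type e), b)) e

noncomputable def τ₀ (v : ℕ) : S.Elem :=
  if v ∈ S.ys.map Prod.fst then .inr ((S.ys.map Prod.fst).idxOf v, false)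
  else if v ∈ S.ys.map Prod.snd then .inr ((S.ys.map Prod.snd).idxOf v, true)
  else .inl (S.σ v)

noncomputable abbrev model : Model := S.M.glue S.w S.interp none

theorem mem_type {a : S.M.D} {p : ℕ × Formula} :
    p ∈ S.type a ↔ p ∈ S.pairs ∧ S.M.sat S.w (Function.update S.σ p.1 a) p.2 :=
  Finset.mem_filter

theorem rep_mem (T : Finset (ℕ × Formula)) : S.rep T ∈ S.M.dom S.w := by
  unfold rep
  split_ifs with h
  exacts [h.choose_spec.1, S.relevant 0]

theorem type_rep {T : Finset (ℕ × Formula)} (h : ∃ a ∈ S.M.dom S.w, S.type a = T) :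
    S.type (S.rep T) = T := by
  rw [rep, dif_pos h]
  exact h.choose_spec.2

theorem type_mem_types (a : S.M.D) : S.type a ∈ S.types :=
  Finset.mem_toList.mpr (Finset.mem_powerset.mpr (Finset.filter_subset _ _))

theorem decode_code_type (a : S.M.D) : S.decode (S.code (S.type a)) = S.type a := by
  rw [decode, code, List.getD_eq_getElem _ _ (List.idxOf_lt_length_iff.mpr (S.type_mem_types a)),
    List.getElem_idxOf]

theorem card_pairs_le : S.pairs.card ≤ S.Γ'.sum Formula.size :=
  Finset.card_biUnion_le.trans (Finset.sum_le_sum fun γ _ => γ.card_typePairs_le_size)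

theorem code_type_lt (a : S.M.D) : S.code (S.type a) < S.ys.length :=
  calc S.code (S.type a) < S.types.length := List.idxOf_lt_length_iff.mpr (S.type_mem_types a)
    _ = 2 ^ S.pairs.card := by rw [types, Finset.length_toList, Finset.card_powerset]
    _ ≤ 2 ^ S.Γ'.sum Formula.size := Nat.pow_le_pow_right two_pos S.card_pairs_le
    _ ≤ S.ys.length := S.length_ge

theorem interp_inl (o : Option (S.M.dom S.w × Bool)) (a : S.M.D) : S.interp o (.inl a) = a := by
  cases o <;> simp [interp, base]

theorem interp_surjective (o : Option (S.M.dom S.w × Bool)) : (S.interp o).Surjective :=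
  fun a => ⟨.inl a, S.interp_inl o a⟩

theorem interp_mem_dom (o : Option (S.M.dom S.w × Bool)) {d : S.Elem}
    (hd : S.base d ∈ S.M.dom S.w) : S.interp o d ∈ S.M.dom S.w := by
  rcases o with _ | ⟨⟨e, he⟩, b⟩
  · exact hd
  · rw [interp, Function.update_apply]
    split_ifs
    exacts [he, hd]

theorem type_interp (o : Option (S.M.dom S.w × Bool)) (d : S.Elem) :
    S.type (S.interp o d) = S.type (S.base d) := by
  rcases o with _ | ⟨⟨e, he⟩, b⟩
  · rfl
  · rw [interp, Function.update_apply]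
    split_ifs with h
    · rw [h, base, Sum.elim_inr, S.decode_code_type, S.type_rep ⟨e, he, rfl⟩]
    · rfl

theorem model_increasing (hM : S.M.Increasing) : S.model.Increasing :=
  have : Countable S.M.D := hM.2.2.2.1
  Model.glue_increasing hM S.interp_surjective fun o _ => S.interp_mem_dom o

theorem τ₀_of_not_mem {v : ℕ} (hv : v ∉ S.freshVars) : S.τ₀ v = .inl (S.σ v) := by
  simp only [freshVars, List.mem_append, not_or] at hv
  simp [τ₀, hv.1, hv.2]

theorem τ₀_fst {i : ℕ} (hi : i < S.ys.length) : S.τ₀ S.ys[i].1 = .inr (i, false) := by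
  have hi' : i < (S.ys.map Prod.fst).length := by simpa using hi
  have hmem : S.ys[i].1 ∈ S.ys.map Prod.fst := List.mem_map_of_mem (List.getElem_mem hi)
  rw [τ₀, if_pos hmem, ← List.getElem_map Prod.fst (h := hi'),
    (List.nodup_append.mp S.nodup).1.idxOf_getElem]

theorem τ₀_snd {i : ℕ} (hi : i < S.ys.length) : S.τ₀ S.ys[i].2 = .inr (i, true) := by
  have hi' : i < (S.ys.map Prod.snd).length := by simpa using hi
  have hmem : S.ys[i].2 ∈ S.ys.map Prod.snd := List.mem_map_of_mem (List.getElem_mem hi)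
  have hnot : S.ys[i].2 ∉ S.ys.map Prod.fst := fun h =>
    (List.nodup_append.mp S.nodup).2.2 _ h _ hmem rfl
  rw [τ₀, if_neg hnot, if_pos hmem, ← List.getElem_map Prod.snd (h := hi'),
    (List.nodup_append.mp S.nodup).2.1.idxOf_getElem]

theorem τ₀_relevant : S.model.relevant none S.τ₀ := by
  intro v
  show S.base (S.τ₀ v) ∈ S.M.dom S.w
  unfold τ₀
  split_ifs
  exacts [S.rep_mem _, S.rep_mem _, S.relevant v]

theorem not_mem_freshVars {γ : Formula} (hγ : γ ∈ S.Γ') {v : ℕ} (hv : v ∈ γ.vars) :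
    v ∉ S.freshVars :=
  fun h => S.fresh v h γ hγ hv

theorem interp_update_τ₀ (o : Option (S.M.dom S.w × Bool)) (z : ℕ) (d : S.Elem) {v : ℕ}
    (hv : v ∉ S.freshVars) :
    (S.interp o ∘ Function.update S.τ₀ z d) v = Function.update S.σ z (S.interp o d) v := by
  rcases eq_or_ne v z with rfl | hvz
  · simp
  · simp [hvz, S.τ₀_of_not_mem hv, S.interp_inl]

theorem sat_interp_update_τ₀_iff (o : Option (S.M.dom S.w × Bool)) {z : ℕ} {δ : Formula}
    (hδ : (z, δ) ∈ S.pairs) (hfv : ∀ v ∈ δ.fv, v ∉ S.freshVars) (d : S.Elem) :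
    S.M.sat S.w (S.interp o ∘ Function.update S.τ₀ z d) δ ↔ (z, δ) ∈ S.type (S.base d) := by
  rw [S.M.sat_congr fun v hv => S.interp_update_τ₀ o z d (hfv v hv), ← S.type_interp o d,
    S.mem_type]
  exact (and_iff_right hδ).symm

theorem mem_pairs {z : ℕ} {χ δ : Formula} (hγ : .all z χ ∈ S.Γ') (hδ : δ ∈ χ.subfs) :
    (z, δ) ∈ S.pairs :=
  Finset.mem_biUnion.mpr ⟨_, hγ, Finset.mem_image_of_mem _ hδ⟩

theorem not_mem_freshVars_of_mem_subfs {γ δ : Formula} (hγ : γ ∈ S.Γ') (hδ : δ ∈ γ.subfs)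
    {v : ℕ} (hv : v ∈ δ.vars) : v ∉ S.freshVars :=
  S.not_mem_freshVars hγ (Formula.vars_subset_of_mem_subfs hδ hv)

theorem model_sat_body {z : ℕ} {χ : Formula} (hγ : .all z χ ∈ S.Γ') (hχ : ABBABE χ)
    (h : S.M.sat S.w S.σ (.all z χ)) {d : S.Elem} (hd : S.base d ∈ S.M.dom S.w) :
    S.model.sat none (Function.update S.τ₀ z d) χ := by
  have hfv {δ} (hδ : δ ∈ χ.subfs) (v) (hv : v ∈ δ.fv) : v ∉ S.freshVars :=
    S.not_mem_freshVars_of_mem_subfs hγ (Finset.mem_insert_of_mem hδ) (Finset.mem_union_left _ hv)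
  refine Model.glue_sat_none_of_ABBABE S.interp_surjective (fun o _ => S.interp_mem_dom o) hχ
    (fun o => ?_) fun δ hδ o => ?_
  · rw [S.M.sat_congr fun v hv => S.interp_update_τ₀ o z d (hfv χ.mem_subfs_self v hv)]
    exact h _ (S.interp_mem_dom o hd)
  · rw [S.sat_interp_update_τ₀_iff o (S.mem_pairs hγ hδ) (hfv hδ),
      S.sat_interp_update_τ₀_iff none (S.mem_pairs hγ hδ) (hfv hδ)]

theorem model_sat_of_agree {τ : ℕ → S.Elem} {σ' : ℕ → S.M.D}
    (hτ : ∀ o, ∀ v ∉ S.freshVars, S.interp o (τ v) = σ' v) {χ : Formula}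
    (hvars : ∀ v ∈ χ.vars, v ∉ S.freshVars) (hχ : ABBABE χ) (h : S.M.sat S.w σ' χ) :
    S.model.sat none τ χ := by
  have hagree : ∀ δ ∈ χ.subfs, ∀ o, S.M.sat S.w (S.interp o ∘ τ) δ ↔ S.M.sat S.w σ' δ :=
    fun δ hδ o => S.M.sat_congr fun v hv =>
      hτ o v (hvars v (Formula.vars_subset_of_mem_subfs hδ (Finset.mem_union_left _ hv)))
  exact Model.glue_sat_none_of_ABBABE S.interp_surjective (fun o _ => S.interp_mem_dom o) hχ
    (fun o => (hagree χ χ.mem_subfs_self o).mpr h)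
    fun δ hδ o => (hagree δ hδ o).trans (hagree δ hδ none).symm

theorem model_sat_of_mem {γ : Formula} (hγ : γ ∈ S.Γ') (hsub : IsSubABBABE γ)
    (h : S.M.sat S.w S.σ γ) : S.model.sat none S.τ₀ γ := by
  rcases hsub.quantABBABE with hA | ⟨z, χ, rfl, hχ⟩ | ⟨z, χ, rfl, hχ⟩
  · refine S.model_sat_of_agree (fun o v hv => ?_) (fun v => S.not_mem_freshVars hγ) hA h
    rw [S.τ₀_of_not_mem hv, S.interp_inl]
  · exact fun d hd => S.model_sat_body hγ hχ h hd
  · obtain ⟨a, ha, h⟩ := h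
    refine ⟨.inl a, ha, S.model_sat_of_agree (fun o v hv => ?_)
      (fun v => S.not_mem_freshVars_of_mem_subfs hγ (Finset.mem_insert_of_mem χ.mem_subfs_self))
      hχ h⟩
    simpa only [S.interp_inl, Function.comp_apply] using S.interp_update_τ₀ o z (.inl a) hv

theorem model_sat_dia_subst_of_witness {x y : ℕ} {φ ψ : Formula} (hφ : .all x φ ∈ S.Γ')
    (ht : .ex y (.dia ψ) ∈ φ.subfs) {d : S.Elem} {e : S.M.D} (he : e ∈ S.M.dom S.w)
    {v : S.M.W} (hv : S.M.R S.w v)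
    (hψ : S.M.sat v (Function.update (Function.update S.σ x (S.base d)) y e) ψ)
    {b : Bool} (hb : d ≠ .inr (S.code (S.type e), b)) {z : ℕ} (hz : z ∈ S.freshVars)
    (hzb : S.τ₀ z = .inr (S.code (S.type e), b)) :
    S.model.sat none (Function.update S.τ₀ x d) (.dia (ψ.subst y z)) := by
  have hvars {u} : u ∈ (Formula.ex y (.dia ψ)).vars → u ∉ S.freshVars :=
    S.not_mem_freshVars_of_mem_subfs hφ (Finset.mem_insert_of_mem ht)
  have hzψ : z ∉ ψ.bv := fun hzψ =>
    hvars (Finset.mem_union_right _ (Finset.mem_insert_of_mem hzψ)) hz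
  have hzx : z ≠ x := by
    rintro rfl
    exact S.not_mem_freshVars hφ (Finset.mem_union_right _ (Finset.mem_insert_self _ _)) hz
  refine ⟨some (some (⟨e, he⟩, b), v), hv, (Model.sat_subst _ hzψ).mpr ?_⟩
  rw [Function.update_of_ne hzx, hzb, Model.glue_sat_some S.interp_surjective]
  refine (S.M.sat_congr fun u hu => ?_).mpr hψ
  rcases eq_or_ne u y with rfl | huy
  · simp [interp]
  rcases eq_or_ne u x with rfl | hux
  · simpa [interp, huy] using Function.update_of_ne hb e S.base
  have hu : u ∉ S.freshVars := hvars (Finset.mem_union_left _ (Finset.mem_erase.mpr ⟨huy, hu⟩))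
  simp [huy, hux, S.τ₀_of_not_mem hu, S.interp_inl]

theorem model_sat_witDisj {x y : ℕ} {φ ψ : Formula} (hφ : .all x φ ∈ S.Γ')
    (ht : .ex y (.dia ψ) ∈ φ.subfs) {d : S.Elem}
    (h : S.model.sat none (Function.update S.τ₀ x d) (.ex y (.dia ψ))) :
    S.model.sat none (Function.update S.τ₀ x d) (mkWitDisj y ψ S.ys) := by
  obtain ⟨o, ho⟩ := Model.exists_sat_of_glue_sat_none_exDia S.interp_surjective
    (fun o _ => S.interp_mem_dom o) h
  rw [S.sat_interp_update_τ₀_iff o (S.mem_pairs hφ ht) fun v hv =>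
    S.not_mem_freshVars_of_mem_subfs hφ (Finset.mem_insert_of_mem ht)
      (Finset.mem_union_left _ hv), S.mem_type] at ho
  obtain ⟨e, he, v, hv, hψ⟩ := ho.2
  have hi : S.code (S.type e) < S.ys.length := S.code_type_lt e
  obtain ⟨b, hb⟩ : ∃ b, d ≠ .inr (S.code (S.type e), b) := by
    by_cases hd : d = .inr (S.code (S.type e), false)
    · exact ⟨true, by simp [hd]⟩
    · exact ⟨false, hd⟩
  have hyᵢ := List.mem_map_of_mem (f := Prod.fst) (List.getElem_mem hi)
  have hyᵢ' := List.mem_map_of_mem (f := Prod.snd) (List.getElem_mem hi)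
  refine Model.sat_bigOr_of_mem _ (List.mem_map_of_mem (List.getElem_mem hi)) ?_
  cases b
  · exact .inl (S.model_sat_dia_subst_of_witness hφ ht he hv hψ hb
      (List.mem_append_left _ hyᵢ) (S.τ₀_fst hi))
  · exact .inr (S.model_sat_dia_subst_of_witness hφ ht he hv hψ hb
      (List.mem_append_right _ hyᵢ') (S.τ₀_snd hi))

end Setup

end BoundedWitness

theorem bounded_witnesses_exact_general (Γ : Finset Formula) (x y : ℕ) (φ ψ : Formula)
    (hsub : ∀ γ ∈ insert (Formula.all x φ) Γ, IsSubABBABE γ)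
    (hcomp : Formula.ex y (.dia ψ) ∈ φ.comps)
    (hsat : SatSet (insert (Formula.all x φ) Γ)) :
    ∀ ys : List (ℕ × ℕ),
      ys.length = 2 ^ ((insert (Formula.all x φ) Γ).sum Formula.size) →
      (ys.map Prod.fst ++ ys.map Prod.snd).Nodup →
      (∀ v ∈ ys.map Prod.fst ++ ys.map Prod.snd,
        ∀ γ ∈ insert (Formula.all x φ) Γ, v ∉ γ.fv ∪ γ.bv) →
      SatSet (insert
        (exChain ys (Formula.all x (replComp (.ex y (.dia ψ)) (mkWitDisj y ψ ys) φ)))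
        Γ) := by
  intro ys hlen hnodup hfresh
  obtain ⟨M, hM, w, σ, hσ, hsatΓ'⟩ := hsat
  let S : BoundedWitness.Setup := ⟨M, w, σ, hσ, insert (.all x φ) Γ, ys, hnodup, hfresh, hlen.ge⟩
  have hφ : Formula.all x φ ∈ S.Γ' := Finset.mem_insert_self _ _
  have hφABB : ABBABE φ := (hsub _ hφ).abbabe_of_all
  refine ⟨S.model, S.model_increasing hM, none, S.τ₀, S.τ₀_relevant, fun γ hγ => ?_⟩
  rcases Finset.mem_insert.mp hγ with rfl | hγ
  · refine S.model.sat_exChain_of_relevant S.τ₀_relevant (fun d hd => ?_) ys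
    exact S.model.sat_replComp hφABB (S.model_sat_witDisj hφ (φ.comps_subset_subfs hcomp))
      (S.model_sat_body hφ hφABB (hsatΓ' _ hφ) hd)
  · have hγ' : γ ∈ S.Γ' := Finset.mem_insert_of_mem hγ
    exact S.model_sat_of_mem hγ' (hsub γ hγ') (hsatΓ' γ hγ')

/-- corollary of the bounded-witness lemma, with
`l = 2^{|Γ'|}` exactly.  Let `Γ' = Γ ∪ {∀x φ}` be a clean finite set of
formulas, each a subformula of the `ABBABE` fragment, where `∃y◇ψ` is a
component of `φ`.  If `⋀Γ ∧ ∀x φ[∃y◇ψ]` is satisfiable in an increasing domain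
model, then for `l = 2^{|Γ'|}` exactly, the formula
`⋀Γ ∧ ∃y1∃y1'…∃yl∃yl' ∀x φ[ȳ◇ψ]` is satisfiable in an increasing domain model,
with `y1,y1',…,yl,yl'` fresh variables and `φ[ȳ◇ψ]` obtained from `φ` by
replacing the component `∃y◇ψ` with `⋁_{i≤l}(◇ψ[yi/y] ∨ ◇ψ[yi'/y])`. -/
theorem bounded_witnesses_exact (Γ : Finset Formula) (x y : ℕ) (φ ψ : Formula)
    (hclean : CleanSet (insert (Formula.all x φ) Γ))
    (hsub : ∀ γ ∈ insert (Formula.all x φ) Γ, IsSubABBABE γ)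
    (hcomp : Formula.ex y (.dia ψ) ∈ φ.comps)
    (hsat : SatSet (insert (Formula.all x φ) Γ)) :
    ∀ ys : List (ℕ × ℕ),
      ys.length = 2 ^ ((insert (Formula.all x φ) Γ).sum Formula.size) →
      (ys.map Prod.fst ++ ys.map Prod.snd).Nodup →
      (∀ v ∈ ys.map Prod.fst ++ ys.map Prod.snd,
        ∀ γ ∈ insert (Formula.all x φ) Γ, v ∉ γ.fv ∪ γ.bv) →
      SatSet (insert
        (exChain ys (Formula.all x (replComp (.ex y (.dia ψ)) (mkWitDisj y ψ ys) φ)))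
        Γ) :=
  bounded_witnesses_exact_general Γ x y φ ψ hsub hcomp hsat
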